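/- arXiv:math/9904136 — 2 statements merged into one kernel-verified Lean document; each statement's English description precedes it below -/
import Mathlib

section
/- Let A be a d × d real matrix with ‖e^{tA}‖ ≤ C e^{−λ t} for all t ≥ 0, where C ≥ 1 and λ > 0, and let B(t) be a continuous matrix-valued function on [t₀, ∞) with B(t) → 0 as t → ∞. Then for any 0 < μ < λ there exist a time t₁ ≥ t₀ and a constant C′ > 0 such that the transition matrix Φ(t,s) of the perturbed linear system ẏ = (A + B(t)) y satisfies ‖Φ(t,s)‖ ≤ C′ e^{−μ (t−s)} for all t ≥ s ≥ t₁. -/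
/-!
Variation of constants writes the solution of `Φ' = (A + B) Φ` as
`Φ t = e^{(t-s)A} Φ s + ∫ₛᵗ e^{(t-τ)A} B τ Φ τ dτ`. If `‖B‖ ≤ ε` on `[s, t]`, the weighted norm
`u τ = e^{λ(τ-s)} ‖Φ τ‖` then satisfies `u ≤ C ‖Φ s‖ + C ε ∫ₛ u`, so Grönwall's inequality gives
`‖Φ t‖ ≤ C ‖Φ s‖ e^{(Cε - λ)(t-s)}`. Since `B → 0`, beyond some `t₁` one may take `ε = (λ - μ)/C`.
-/

open Set Filter intervalIntegral NormedSpace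
open scoped Topology

theorem le_mul_exp_of_le_add_mul_integral {u : ℝ → ℝ} {a K s t : ℝ} (hK : 0 ≤ K)
    (hu : ContinuousOn u (Icc s t)) (hu0 : ∀ τ ∈ Icc s t, 0 ≤ u τ)
    (h : ∀ τ ∈ Icc s t, u τ ≤ a + K * ∫ x in s..τ, u x) :
    ∀ τ ∈ Icc s t, u τ ≤ a * Real.exp (K * (τ - s)) := by
  set v : ℝ → ℝ := fun τ => a + K * ∫ x in s..τ, u x
  have hv_nonneg : ∀ τ ∈ Icc s t, 0 ≤ v τ := fun τ hτ => (hu0 τ hτ).trans (h τ hτ)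
  have hv_deriv : ∀ τ ∈ Icc s t, HasDerivWithinAt v (K * u τ) (Icc s t) τ := by
    intro τ hτ
    have := Fact.mk hτ
    refine (integral_hasDerivWithinAt_right ?_ ?_ ?_).const_mul K |>.const_add a
    · exact (hu.mono (Icc_subset_Icc_right hτ.2)).intervalIntegrable_of_Icc hτ.1
    · exact hu.stronglyMeasurableAtFilter_nhdsWithin measurableSet_Icc τ
    · exact hu τ hτ
  have hbound := norm_le_gronwallBound_of_norm_deriv_right_le (ε := 0)
    (fun τ hτ => (hv_deriv τ hτ).continuousWithinAt)
    (fun τ hτ => (hv_deriv τ (Ico_subset_Icc_self hτ)).mono_of_mem_nhdsWithin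
      (mem_of_superset (Icc_mem_nhdsGE hτ.2) (Icc_subset_Icc_left hτ.1)))
    (le_refl ‖v s‖)
    (fun τ hτ => by
      have hτ' := Ico_subset_Icc_self hτ
      rw [Real.norm_of_nonneg (mul_nonneg hK (hu0 τ hτ')),
        Real.norm_of_nonneg (hv_nonneg τ hτ'), add_zero]
      exact mul_le_mul_of_nonneg_left (h τ hτ') hK)
  intro τ hτ
  have ha : 0 ≤ a := by simpa [v] using hv_nonneg s ⟨le_rfl, hτ.1.trans hτ.2⟩
  calc u τ ≤ v τ := h τ hτ
    _ ≤ a * Real.exp (K * (τ - s)) := by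
      simpa [v, gronwallBound_ε0, abs_of_nonneg ha, Real.norm_of_nonneg (hv_nonneg τ hτ)]
        using hbound τ hτ

variable {𝔸 : Type*} [NormedRing 𝔸] [NormedAlgebra ℝ 𝔸]

section ExponentialBound

variable {A : 𝔸} {C lam : ℝ}

theorem nonneg_of_norm_exp_smul_le
    (hA : ∀ r : ℝ, 0 ≤ r → ‖exp (r • A)‖ ≤ C * Real.exp (-lam * r)) : 0 ≤ C := by
  simpa using (norm_nonneg _).trans (hA 0 le_rfl)

theorem exp_mul_norm_exp_smul_le
    (hA : ∀ r : ℝ, 0 ≤ r → ‖exp (r • A)‖ ≤ C * Real.exp (-lam * r)) {s x τ : ℝ} (hxτ : x ≤ τ) :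
    Real.exp (lam * (τ - s)) * ‖exp ((τ - x) • A)‖ ≤ C * Real.exp (lam * (x - s)) :=
  calc Real.exp (lam * (τ - s)) * ‖exp ((τ - x) • A)‖
      ≤ Real.exp (lam * (τ - s)) * (C * Real.exp (-lam * (τ - x))) := by
        gcongr; exact hA _ (sub_nonneg.2 hxτ)
    _ = C * Real.exp (lam * (x - s)) := by
        rw [mul_left_comm, ← Real.exp_add]; ring_nf

end ExponentialBound

variable [CompleteSpace 𝔸]

theorem continuous_exp_smul (A : 𝔸) : Continuous fun r : ℝ => exp (r • A) :=
  continuous_iff_continuousAt.2 fun r => (hasDerivAt_exp_smul_const A r).continuousAt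

theorem hasDerivAt_exp_sub_smul_mul {A : 𝔸} {B Φ : ℝ → 𝔸} {t τ : ℝ}
    (hΦ : HasDerivAt Φ ((A + B τ) * Φ τ) τ) :
    HasDerivAt (fun x => exp ((t - x) • A) * Φ x) (exp ((t - τ) • A) * (B τ * Φ τ)) τ := by
  have hexp : HasDerivAt (fun x : ℝ => exp ((t - x) • A)) (-(exp ((t - τ) • A) * A)) τ := by
    simpa [Function.comp_def] using
      (hasDerivAt_exp_smul_const A (t - τ)).scomp τ ((hasDerivAt_id τ).const_sub t)
  refine (hexp.mul hΦ).congr_deriv ?_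
  simp only [mul_add, add_mul, neg_mul, mul_assoc]
  abel

theorem eq_exp_smul_mul_add_integral {A : 𝔸} {B Φ : ℝ → 𝔸} {s t : ℝ} (hst : s ≤ t)
    (hB : ContinuousOn B (Icc s t))
    (hΦ : ∀ τ ∈ Icc s t, HasDerivAt Φ ((A + B τ) * Φ τ) τ) :
    Φ t = exp ((t - s) • A) * Φ s + ∫ τ in s..t, exp ((t - τ) • A) * (B τ * Φ τ) := by
  have hΦc : ContinuousOn Φ (Icc s t) := fun τ hτ => (hΦ τ hτ).continuousAt.continuousWithinAt
  have hint : IntervalIntegrable (fun τ => exp ((t - τ) • A) * (B τ * Φ τ))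
      MeasureTheory.volume s t :=
    (((continuous_exp_smul A).comp (continuous_const.sub continuous_id)).continuousOn.mul
      (hB.mul hΦc)).intervalIntegrable_of_Icc hst
  rw [integral_eq_sub_of_hasDerivAt (fun τ hτ => hasDerivAt_exp_sub_smul_mul
    (hΦ τ (uIcc_of_le hst ▸ hτ))) hint]
  simp

section Perturbation

variable {A : 𝔸} {B Φ : ℝ → 𝔸} {C lam ε s t : ℝ}

theorem exp_mul_norm_le_add_mul_integral
    (hA : ∀ r : ℝ, 0 ≤ r → ‖exp (r • A)‖ ≤ C * Real.exp (-lam * r))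
    (hB : ContinuousOn B (Icc s t)) (hBε : ∀ τ ∈ Icc s t, ‖B τ‖ ≤ ε)
    (hΦ : ∀ τ ∈ Icc s t, HasDerivAt Φ ((A + B τ) * Φ τ) τ) :
    ∀ τ ∈ Icc s t, Real.exp (lam * (τ - s)) * ‖Φ τ‖ ≤
      C * ‖Φ s‖ + C * ε * ∫ x in s..τ, Real.exp (lam * (x - s)) * ‖Φ x‖ := by
  intro τ hτ
  have hC := nonneg_of_norm_exp_smul_le hA
  have hsub : Icc s τ ⊆ Icc s t := Icc_subset_Icc_right hτ.2
  have hΦc : ContinuousOn Φ (Icc s τ) := fun x hx =>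
    (hΦ x (hsub hx)).continuousAt.continuousWithinAt
  set f : ℝ → 𝔸 := fun x => exp ((τ - x) • A) * (B x * Φ x)
  have hf : ContinuousOn f (Icc s τ) :=
    ((continuous_exp_smul A).comp (continuous_const.sub continuous_id)).continuousOn.mul
      ((hB.mono hsub).mul hΦc)
  have hf_le : ∀ x ∈ Icc s τ,
      Real.exp (lam * (τ - s)) * ‖f x‖ ≤ C * ε * (Real.exp (lam * (x - s)) * ‖Φ x‖) := by
    intro x hx
    calc Real.exp (lam * (τ - s)) * ‖f x‖
        ≤ Real.exp (lam * (τ - s)) * ‖exp ((τ - x) • A)‖ * (‖B x‖ * ‖Φ x‖) := by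
          rw [mul_assoc]; gcongr
          exact (norm_mul_le _ _).trans (by gcongr; exact norm_mul_le _ _)
      _ ≤ C * Real.exp (lam * (x - s)) * (ε * ‖Φ x‖) := by
          gcongr ?_ * ?_
          · exact exp_mul_norm_exp_smul_le hA hx.2
          · gcongr; exact hBε x (hsub hx)
      _ = C * ε * (Real.exp (lam * (x - s)) * ‖Φ x‖) := by ring
  calc Real.exp (lam * (τ - s)) * ‖Φ τ‖
      = Real.exp (lam * (τ - s)) * ‖exp ((τ - s) • A) * Φ s + ∫ x in s..τ, f x‖ := by
        rw [← eq_exp_smul_mul_add_integral hτ.1 (hB.mono hsub) fun x hx => hΦ x (hsub hx)]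
    _ ≤ Real.exp (lam * (τ - s)) * ‖exp ((τ - s) • A)‖ * ‖Φ s‖
          + ∫ x in s..τ, Real.exp (lam * (τ - s)) * ‖f x‖ := by
        rw [integral_const_mul, mul_assoc, ← mul_add]
        gcongr
        exact (norm_add_le _ _).trans
          (add_le_add (norm_mul_le _ _) (norm_integral_le_integral_norm hτ.1))
    _ ≤ C * ‖Φ s‖ + ∫ x in s..τ, C * ε * (Real.exp (lam * (x - s)) * ‖Φ x‖) := by
        gcongr
        · simpa using exp_mul_norm_exp_smul_le (s := s) hA hτ.1
        · refine integral_mono_on hτ.1 ?_ ?_ hf_le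
          · exact (continuous_const.continuousOn.mul hf.norm).intervalIntegrable_of_Icc hτ.1
          · exact (continuousOn_const.mul (by fun_prop)).intervalIntegrable_of_Icc hτ.1
    _ = C * ‖Φ s‖ + C * ε * ∫ x in s..τ, Real.exp (lam * (x - s)) * ‖Φ x‖ := by
        rw [integral_const_mul]

theorem norm_le_mul_exp_of_hasDerivAt_add
    (hA : ∀ r : ℝ, 0 ≤ r → ‖exp (r • A)‖ ≤ C * Real.exp (-lam * r)) (hst : s ≤ t)
    (hB : ContinuousOn B (Icc s t)) (hBε : ∀ τ ∈ Icc s t, ‖B τ‖ ≤ ε)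
    (hΦ : ∀ τ ∈ Icc s t, HasDerivAt Φ ((A + B τ) * Φ τ) τ) :
    ‖Φ t‖ ≤ C * ‖Φ s‖ * Real.exp ((C * ε - lam) * (t - s)) := by
  have hC := nonneg_of_norm_exp_smul_le hA
  have hε : 0 ≤ ε := (norm_nonneg _).trans (hBε s ⟨le_rfl, hst⟩)
  have hΦc : ContinuousOn Φ (Icc s t) := fun τ hτ => (hΦ τ hτ).continuousAt.continuousWithinAt
  have hgronwall := le_mul_exp_of_le_add_mul_integral (mul_nonneg hC hε) (by fun_prop)
    (fun τ _ => by positivity) (exp_mul_norm_le_add_mul_integral hA hB hBε hΦ) t ⟨hst, le_rfl⟩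
  calc ‖Φ t‖ = Real.exp (-(lam * (t - s))) * (Real.exp (lam * (t - s)) * ‖Φ t‖) := by
        rw [← mul_assoc, ← Real.exp_add, neg_add_cancel, Real.exp_zero, one_mul]
    _ ≤ Real.exp (-(lam * (t - s))) * (C * ‖Φ s‖ * Real.exp (C * ε * (t - s))) := by gcongr
    _ = C * ‖Φ s‖ * Real.exp ((C * ε - lam) * (t - s)) := by
        rw [mul_left_comm, ← Real.exp_add]; ring_nf

end Perturbation

theorem stmt4_general (d : ℕ)
    (A : EuclideanSpace ℝ (Fin d) →L[ℝ] EuclideanSpace ℝ (Fin d))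
    (C lam : ℝ) (hC : 1 ≤ C)
    (hA : ∀ t : ℝ, 0 ≤ t → ‖NormedSpace.exp (t • A)‖ ≤ C * Real.exp (-lam * t))
    (t₀ : ℝ)
    (B : ℝ → (EuclideanSpace ℝ (Fin d) →L[ℝ] EuclideanSpace ℝ (Fin d)))
    (hB_cont : ContinuousOn B (Ici t₀))
    (hB_lim : Tendsto B atTop (𝓝 0))
    (Φ : ℝ → ℝ → (EuclideanSpace ℝ (Fin d) →L[ℝ] EuclideanSpace ℝ (Fin d)))
    (hΦ_init : ∀ s ∈ Ici t₀, Φ s s = ContinuousLinearMap.id ℝ _)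
    (hΦ_ode : ∀ s ∈ Ici t₀, ∀ t ∈ Ici t₀,
      HasDerivAt (fun τ => Φ τ s) ((A + B t).comp (Φ t s)) t) :
    ∀ μ : ℝ, 0 < μ → μ < lam →
      ∃ t₁ : ℝ, t₀ ≤ t₁ ∧ ∃ C' > (0 : ℝ), ∀ s t : ℝ, t₁ ≤ s → s ≤ t →
        ‖Φ t s‖ ≤ C' * Real.exp (-μ * (t - s)) := by
  intro μ _ hμ
  have hC₀ : 0 < C := one_pos.trans_le hC
  set ε := (lam - μ) / C
  obtain ⟨T, hT⟩ := eventually_atTop.1 <|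
    NormedAddGroup.tendsto_nhds_zero.1 hB_lim ε (div_pos (sub_pos.2 hμ) hC₀)
  refine ⟨max t₀ T, le_max_left _ _, C, hC₀, fun s t hs hst => ?_⟩
  have hIcc : Icc s t ⊆ Ici t₀ := fun τ hτ => (le_max_left _ _).trans (hs.trans hτ.1)
  have hbound := norm_le_mul_exp_of_hasDerivAt_add hA hst (hB_cont.mono hIcc)
    (fun τ hτ => (hT τ ((le_max_right _ _).trans (hs.trans hτ.1))).le)
    (fun τ hτ => hΦ_ode s (hIcc ⟨le_rfl, hst⟩) τ (hIcc hτ)) -- `f.comp g` is `f * g` by `rfl`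
  rw [hΦ_init s (hIcc ⟨le_rfl, hst⟩), mul_div_cancel₀ _ hC₀.ne', sub_sub_cancel_left] at hbound
  refine hbound.trans ?_
  gcongr
  exact mul_le_of_le_one_right hC₀.le ContinuousLinearMap.norm_id_le

/-- If `‖e^{tA}‖ ≤ C e^{-λ t}` for `t ≥ 0` (`C ≥ 1`, `λ > 0`) and `B(t)`
is a continuous matrix-valued function on `[t₀, ∞)` with `B(t) → 0` as `t → ∞`, then for
any `0 < μ < λ` there are `t₁ ≥ t₀` and `C' > 0` such that the transition matrix
`Φ(t,s)` of `ẏ = (A + B(t)) y` satisfies `‖Φ(t,s)‖ ≤ C' e^{-μ(t-s)}` for `t ≥ s ≥ t₁`. -/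
theorem stmt4 (d : ℕ)
    (A : EuclideanSpace ℝ (Fin d) →L[ℝ] EuclideanSpace ℝ (Fin d))
    (C lam : ℝ) (hC : 1 ≤ C) (hlam : 0 < lam)
    (hA : ∀ t : ℝ, 0 ≤ t → ‖NormedSpace.exp (t • A)‖ ≤ C * Real.exp (-lam * t))
    (t₀ : ℝ)
    (B : ℝ → (EuclideanSpace ℝ (Fin d) →L[ℝ] EuclideanSpace ℝ (Fin d)))
    (hB_cont : ContinuousOn B (Ici t₀))
    (hB_lim : Tendsto B atTop (𝓝 0))
    (Φ : ℝ → ℝ → (EuclideanSpace ℝ (Fin d) →L[ℝ] EuclideanSpace ℝ (Fin d)))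
    (hΦ_init : ∀ s ∈ Ici t₀, Φ s s = ContinuousLinearMap.id ℝ _)
    (hΦ_ode : ∀ s ∈ Ici t₀, ∀ t ∈ Ici t₀,
      HasDerivAt (fun τ => Φ τ s) ((A + B t).comp (Φ t s)) t) :
    ∀ μ : ℝ, 0 < μ → μ < lam →
      ∃ t₁ : ℝ, t₀ ≤ t₁ ∧ ∃ C' > (0 : ℝ), ∀ s t : ℝ, t₁ ≤ s → s ≤ t →
        ‖Φ t s‖ ≤ C' * Real.exp (-μ * (t - s)) :=
  stmt4_general d A C lam hC hA t₀ B hB_cont hB_lim Φ hΦ_init hΦ_ode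
end

section
/- Let f : ℝ^d → ℝ^d be continuously differentiable with a globally Lipschitz derivative on a neighborhood of a trajectory, and suppose x(t) and z(t) are two solutions of ẋ = f(x) with ‖x(0) − z(0)‖ = δ small. Then z(t) − x(t) = Φ(t,0)(z(0) − x(0)) + ρ(t), where Φ(t,s) is the transition matrix of the variational equation along x(t) and the remainder satisfies ‖ρ(t)‖ ≤ C(T) δ² for 0 ≤ t ≤ T for a constant C(T) depending on T and f but not on δ; i.e., to first order, perturbations of the initial condition are propagated by the transition matrix of the variational equation. -/
open scoped Topology NNReal
open Set

set_option maxHeartbeats 1000000 in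
/-- Let `f` be `C¹` with derivative `Df` Lipschitz on a neighborhood
`U` of the trajectory of the solution `x` on `[0,T]`, and let `Φ(t,s)` be the transition
matrix of the variational equation `ẏ = Df(x(t)) y` along `x`. Then there are `δ₀ > 0`
and a constant `C = C(T)` (independent of the perturbation size) such that for every
solution `z` of `ẋ = f(x)` staying in `U` with `‖z(0) - x(0)‖ = δ ≤ δ₀`, the remainder
`ρ(t) = z(t) - x(t) - Φ(t,0)(z(0) - x(0))` satisfies `‖ρ(t)‖ ≤ C δ²` on `[0,T]`:
to first order, perturbations of the initial condition are propagated by the transition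
matrix of the variational equation. -/
theorem stmt16 (d : ℕ) (T : ℝ) (hT : 0 ≤ T)
    (f : EuclideanSpace ℝ (Fin d) → EuclideanSpace ℝ (Fin d))
    (Df : EuclideanSpace ℝ (Fin d) →
      (EuclideanSpace ℝ (Fin d) →L[ℝ] EuclideanSpace ℝ (Fin d)))
    (hDf : ∀ y, HasFDerivAt f (Df y) y)
    (hDf_cont : Continuous Df)
    -- `U` is a neighborhood of the trajectory on which `Df` is Lipschitz
    (U : Set (EuclideanSpace ℝ (Fin d))) (hU_open : IsOpen U)
    (K₀ : ℝ≥0) (hDf_lip : LipschitzOnWith K₀ Df U)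
    (x : ℝ → EuclideanSpace ℝ (Fin d))
    (hx : ∀ t ∈ Icc (0 : ℝ) T, HasDerivAt x (f (x t)) t)
    (hxU : ∀ t ∈ Icc (0 : ℝ) T, x t ∈ U)
    -- transition matrix of the variational equation along `x`
    (Φ : ℝ → ℝ → (EuclideanSpace ℝ (Fin d) →L[ℝ] EuclideanSpace ℝ (Fin d)))
    (hΦ_init : ∀ s ∈ Icc (0 : ℝ) T, Φ s s = ContinuousLinearMap.id ℝ _)
    (hΦ_ode : ∀ s ∈ Icc (0 : ℝ) T, ∀ t ∈ Icc (0 : ℝ) T,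
      HasDerivAt (fun τ => Φ τ s) ((Df (x t)).comp (Φ t s)) t) :
    ∃ δ₀ > (0 : ℝ), ∃ C > (0 : ℝ),
      ∀ z : ℝ → EuclideanSpace ℝ (Fin d),
        (∀ t ∈ Icc (0 : ℝ) T, HasDerivAt z (f (z t)) t) →
        (∀ t ∈ Icc (0 : ℝ) T, z t ∈ U) →
        ‖z 0 - x 0‖ ≤ δ₀ →
        ∀ t ∈ Icc (0 : ℝ) T,
          ‖z t - x t - Φ t 0 (z 0 - x 0)‖ ≤ C * ‖z 0 - x 0‖ ^ 2 := by
  have h0T : (0 : ℝ) ∈ Icc (0 : ℝ) T := ⟨le_refl _, hT⟩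
  have hxcont : ContinuousOn x (Icc 0 T) := fun t ht =>
    ((hx t ht).continuousAt).continuousWithinAt
  have hKcpt : IsCompact (x '' Icc (0 : ℝ) T) := isCompact_Icc.image_of_continuousOn hxcont
  have himg : x '' Icc (0 : ℝ) T ⊆ U := by rintro _ ⟨t, ht, rfl⟩; exact hxU t ht
  obtain ⟨ε, hε, hthick⟩ := hKcpt.exists_cthickening_subset_open hU_open himg
  have hball : ∀ t ∈ Icc (0 : ℝ) T, Metric.closedBall (x t) ε ⊆ U := fun t ht =>
    (Metric.closedBall_subset_cthickening (mem_image_of_mem x ht) ε).trans hthick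
  obtain ⟨M₀, hM₀⟩ := hKcpt.exists_bound_of_continuousOn hDf_cont.continuousOn
  set M : ℝ := max M₀ 1 with hMdef
  have hM1 : (1 : ℝ) ≤ M := le_max_right _ _
  have hMb : ∀ t ∈ Icc (0 : ℝ) T, ‖Df (x t)‖ ≤ M := fun t ht =>
    (hM₀ _ (mem_image_of_mem x ht)).trans (le_max_left _ _)
  set L : ℝ := M + (K₀ : ℝ) * ε with hLdef
  have hKε : (0 : ℝ) ≤ (K₀ : ℝ) * ε := mul_nonneg K₀.coe_nonneg hε.le
  have hL1 : (1 : ℝ) ≤ L := le_add_of_le_of_nonneg hM1 hKε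
  have hL0 : (0 : ℝ) < L := lt_of_lt_of_le one_pos hL1
  -- Taylor remainder estimate
  have key : ∀ t ∈ Icc (0 : ℝ) T, ∀ b : EuclideanSpace ℝ (Fin d), ‖b - x t‖ ≤ ε →
      ‖f b - f (x t) - Df (x t) (b - x t)‖ ≤ (K₀ : ℝ) * ‖b - x t‖ ^ 2 := by
    intro t ht b hb
    set a := x t with ha
    have hsegU : segment ℝ a b ⊆ U := by
      refine Subset.trans ?_ (hball t ht)
      exact (convex_closedBall a ε).segment_subset (Metric.mem_closedBall_self hε.le)
        (by simpa [Metric.mem_closedBall, dist_eq_norm] using hb)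
    have hdist : ∀ y ∈ segment ℝ a b, ‖y - a‖ ≤ ‖b - a‖ := by
      intro y hy
      rw [segment_eq_image'] at hy
      obtain ⟨θ, hθ, rfl⟩ := hy
      simp only [add_sub_cancel_left, norm_smul, Real.norm_eq_abs, abs_of_nonneg hθ.1]
      exact mul_le_of_le_one_left (norm_nonneg _) hθ.2
    have hmvt := (convex_segment a b).norm_image_sub_le_of_norm_hasFDerivWithin_le
      (f := fun y => f y - Df a y) (f' := fun y => Df y - Df a) (C := (K₀ : ℝ) * ‖b - a‖)
      (fun y _ => ((hDf y).sub ((Df a).hasFDerivAt)).hasFDerivWithinAt)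
      (fun y hy => by
        have h1 : dist (Df y) (Df a) ≤ (K₀ : ℝ) * dist y a :=
          hDf_lip.dist_le_mul y (hsegU hy) a (hsegU (left_mem_segment ℝ a b))
        rw [dist_eq_norm, dist_eq_norm] at h1
        exact h1.trans (mul_le_mul_of_nonneg_left (hdist y hy) K₀.coe_nonneg))
      (left_mem_segment ℝ a b) (right_mem_segment ℝ a b)
    have heq : f b - f a - Df a (b - a) = (f b - Df a b) - (f a - Df a a) := by
      rw [map_sub]; abel
    rw [heq]
    calc ‖(f b - Df a b) - (f a - Df a a)‖ ≤ (K₀ : ℝ) * ‖b - a‖ * ‖b - a‖ := by simpa using hmvt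
      _ = (K₀ : ℝ) * ‖b - a‖ ^ 2 := by ring
  refine ⟨ε / (4 * Real.exp (L * T)), by positivity,
    (K₀ : ℝ) * (Real.exp (L * T)) ^ 3 + 1, by positivity, ?_⟩
  intro z hz hzU hz0
  set δ := ‖z 0 - x 0‖ with hδdef
  have hδ0 : 0 ≤ δ := norm_nonneg _
  have hzcont : ContinuousOn z (Icc 0 T) := fun t ht =>
    ((hz t ht).continuousAt).continuousWithinAt
  have hδe : ∀ t ∈ Icc (0 : ℝ) T, δ * Real.exp (L * t) ≤ ε / 4 := by
    intro t ht
    have h1 : Real.exp (L * t) ≤ Real.exp (L * T) :=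
      Real.exp_le_exp.mpr (mul_le_mul_of_nonneg_left ht.2 hL0.le)
    have h2 : δ * Real.exp (L * t) ≤ (ε / (4 * Real.exp (L * T))) * Real.exp (L * T) :=
      mul_le_mul hz0 h1 (Real.exp_pos _).le (by positivity)
    have h3 : (ε / (4 * Real.exp (L * T))) * Real.exp (L * T) = ε / 4 := by
      field_simp
    linarith
  -- Step A: Gronwall bootstrap
  have stepA : ∀ t ∈ Icc (0 : ℝ) T, ‖z t - x t‖ ≤ δ * Real.exp (L * t) := by
    set S : Set ℝ := {t | t ∈ Icc (0 : ℝ) T ∧ ‖z t - x t‖ ≤ δ * Real.exp (L * t)} with hSdef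
    have hScl : IsClosed (S ∩ Icc (0 : ℝ) T) := by
      have hSeq : S ∩ Icc (0 : ℝ) T =
          Icc (0 : ℝ) T ∩ (fun t => ‖z t - x t‖ - δ * Real.exp (L * t)) ⁻¹' (Iic 0) := by
        ext t
        simp only [hSdef, mem_inter_iff, mem_setOf_eq, mem_preimage, mem_Iic, sub_nonpos]
        tauto
      rw [hSeq]
      refine ContinuousOn.preimage_isClosed_of_isClosed ?_ isClosed_Icc isClosed_Iic
      exact ((hzcont.sub hxcont).norm).sub
        ((continuous_const.mul ((Real.continuous_exp).comp
          (continuous_const.mul continuous_id))).continuousOn)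
    have h0S : (0 : ℝ) ∈ S := ⟨h0T, by simp [hδdef]⟩
    have hsub : Icc (0 : ℝ) T ⊆ S := by
      refine IsClosed.Icc_subset_of_forall_exists_gt hScl h0S ?_
      rintro t ⟨⟨htIcc, hbd⟩, ht0, htT⟩ y hy
      have hFt : ‖z t - x t‖ < ε / 2 := lt_of_le_of_lt (hbd.trans (hδe t htIcc)) (by linarith)
      have hcont : ContinuousWithinAt (fun s => ‖z s - x s‖) (Icc (0 : ℝ) T) t :=
        ((hzcont.sub hxcont).norm) t htIcc
      have hnhds : (fun s => ‖z s - x s‖) ⁻¹' (Iio (ε / 2)) ∈ 𝓝[Icc (0 : ℝ) T] t :=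
        hcont (Iio_mem_nhds hFt)
      rw [Metric.mem_nhdsWithin_iff] at hnhds
      obtain ⟨h, hh, hhsub⟩ := hnhds
      set b := min (min y (t + h / 2)) T with hbdef
      have htb : t < b := lt_min (lt_min hy (by linarith)) htT
      have hbT : b ≤ T := min_le_right _ _
      have hby : b ≤ y := (min_le_left _ _).trans (min_le_left _ _)
      have hbth : b ≤ t + h / 2 := (min_le_left _ _).trans (min_le_right _ _)
      have hsubIcc : Icc t b ⊆ Icc (0 : ℝ) T := Icc_subset_Icc ht0 hbT
      have hsmall : ∀ s ∈ Icc t b, ‖z s - x s‖ < ε / 2 := by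
        intro s hs
        have hs1 : s ∈ Metric.ball t h := by
          rw [Metric.mem_ball, Real.dist_eq, abs_of_nonneg (by linarith [hs.1])]
          linarith [hs.2]
        exact hhsub ⟨hs1, hsubIcc hs⟩
      have hG := norm_le_gronwallBound_of_norm_deriv_right_le
        (f := fun s => z s - x s) (f' := fun s => f (z s) - f (x s))
        (δ := δ * Real.exp (L * t)) (K := L) (ε := 0) (a := t) (b := b)
        ((hzcont.sub hxcont).mono hsubIcc)
        (fun s hs => (((hz s (hsubIcc (Ico_subset_Icc_self hs))).sub
          (hx s (hsubIcc (Ico_subset_Icc_self hs)))).hasDerivWithinAt))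
        hbd
        (fun s hs => by
          show ‖f (z s) - f (x s)‖ ≤ L * ‖z s - x s‖ + 0
          have hsIcc : s ∈ Icc (0 : ℝ) T := hsubIcc (Ico_subset_Icc_self hs)
          have hεs : ‖z s - x s‖ ≤ ε :=
            le_of_lt (lt_of_lt_of_le (hsmall s (Ico_subset_Icc_self hs)) (by linarith))
          have h1 : ‖f (z s) - f (x s)‖ ≤
              ‖Df (x s) (z s - x s)‖ + ‖f (z s) - f (x s) - Df (x s) (z s - x s)‖ := by
            have := norm_add_le (Df (x s) (z s - x s))
              (f (z s) - f (x s) - Df (x s) (z s - x s))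
            simpa using this
          have h2 : ‖Df (x s) (z s - x s)‖ ≤ M * ‖z s - x s‖ :=
            ((Df (x s)).le_opNorm _).trans
              (mul_le_mul_of_nonneg_right (hMb s hsIcc) (norm_nonneg _))
          have h3 := key s hsIcc (z s) hεs
          have h4 : (K₀ : ℝ) * ‖z s - x s‖ ^ 2 ≤ (K₀ : ℝ) * ε * ‖z s - x s‖ := by
            have hmul : 0 ≤ (K₀ : ℝ) * (ε - ‖z s - x s‖) * ‖z s - x s‖ :=
              mul_nonneg (mul_nonneg K₀.coe_nonneg (by linarith)) (norm_nonneg _)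
            nlinarith [hmul]
          rw [hLdef]
          nlinarith [norm_nonneg (z s - x s)])
      have hGb := hG b ⟨htb.le, le_rfl⟩
      rw [gronwallBound_ε0] at hGb
      have hGb' : ‖z b - x b‖ ≤ δ * Real.exp (L * b) := by
        calc ‖z b - x b‖ ≤ δ * Real.exp (L * t) * Real.exp (L * (b - t)) := hGb
          _ = δ * Real.exp (L * b) := by rw [mul_assoc, ← Real.exp_add]; ring_nf
      exact ⟨b, ⟨⟨ht0.trans htb.le, hbT⟩, hGb'⟩, htb, hby⟩
    exact fun t ht => (hsub ht).2
  have hclose : ∀ t ∈ Icc (0 : ℝ) T, ‖z t - x t‖ ≤ ε := fun t ht =>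
    (stepA t ht).trans ((hδe t ht).trans (by linarith))
  -- Step B: Gronwall for the remainder
  set w := z 0 - x 0 with hwdef
  set Eb : ℝ := (K₀ : ℝ) * (δ * Real.exp (L * T)) ^ 2 with hEbdef
  have hEb0 : 0 ≤ Eb := by positivity
  have hΦw : ∀ t ∈ Icc (0 : ℝ) T,
      HasDerivAt (fun τ => Φ τ 0 w) (Df (x t) (Φ t 0 w)) t := by
    intro t ht
    have h := (hΦ_ode 0 h0T t ht).clm_apply (hasDerivAt_const t w)
    simpa using h
  have hρG := norm_le_gronwallBound_of_norm_deriv_right_le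
    (f := fun t => z t - x t - Φ t 0 w)
    (f' := fun t => f (z t) - f (x t) - Df (x t) (Φ t 0 w))
    (δ := 0) (K := L) (ε := Eb) (a := 0) (b := T)
    ((hzcont.sub hxcont).sub
      (fun t ht => ((hΦw t ht).continuousAt).continuousWithinAt))
    (fun t ht => (((hz t (Ico_subset_Icc_self ht)).sub
      (hx t (Ico_subset_Icc_self ht))).sub (hΦw t (Ico_subset_Icc_self ht))).hasDerivWithinAt)
    (by simp [hΦ_init 0 h0T, hwdef])
    (fun t ht => by
      show ‖f (z t) - f (x t) - Df (x t) (Φ t 0 w)‖ ≤ L * ‖z t - x t - Φ t 0 w‖ + Eb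
      have htIcc : t ∈ Icc (0 : ℝ) T := Ico_subset_Icc_self ht
      have hid : f (z t) - f (x t) - Df (x t) (Φ t 0 w)
          = (f (z t) - f (x t) - Df (x t) (z t - x t))
            + Df (x t) (z t - x t - Φ t 0 w) := by
        rw [map_sub (Df (x t)) (z t - x t) (Φ t 0 w)]; abel
      rw [hid]
      have h1 := norm_add_le (f (z t) - f (x t) - Df (x t) (z t - x t))
        (Df (x t) (z t - x t - Φ t 0 w))
      have h2 : ‖Df (x t) (z t - x t - Φ t 0 w)‖ ≤ M * ‖z t - x t - Φ t 0 w‖ :=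
        ((Df (x t)).le_opNorm _).trans
          (mul_le_mul_of_nonneg_right (hMb t htIcc) (norm_nonneg _))
      have h3 := key t htIcc (z t) (hclose t htIcc)
      have h4 : ‖z t - x t‖ ≤ δ * Real.exp (L * T) := by
        refine (stepA t htIcc).trans (mul_le_mul_of_nonneg_left ?_ hδ0)
        exact Real.exp_le_exp.mpr (mul_le_mul_of_nonneg_left htIcc.2 hL0.le)
      have h5 : (K₀ : ℝ) * ‖z t - x t‖ ^ 2 ≤ Eb := by
        rw [hEbdef]
        exact mul_le_mul_of_nonneg_left (pow_le_pow_left₀ (norm_nonneg _) h4 2) K₀.coe_nonneg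
      have h6 : M * ‖z t - x t - Φ t 0 w‖ ≤ L * ‖z t - x t - Φ t 0 w‖ := by
        rw [hLdef]
        exact mul_le_mul_of_nonneg_right (by linarith) (norm_nonneg _)
      linarith)
  intro t ht
  have hρ := hρG t ht
  rw [gronwallBound_of_K_ne_0 hL0.ne'] at hρ
  have hexp : Real.exp (L * (t - 0)) - 1 ≤ Real.exp (L * T) := by
    have : Real.exp (L * (t - 0)) ≤ Real.exp (L * T) :=
      Real.exp_le_exp.mpr (mul_le_mul_of_nonneg_left (by linarith [ht.2]) hL0.le)
    linarith
  have hdiv : Eb / L ≤ Eb := div_le_self hEb0 hL1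
  have hbound : ‖z t - x t - Φ t 0 w‖ ≤ Eb * Real.exp (L * T) := by
    have hEL : 0 ≤ Eb / L := div_nonneg hEb0 hL0.le
    calc ‖z t - x t - Φ t 0 w‖ ≤ 0 * Real.exp (L * (t - 0))
          + Eb / L * (Real.exp (L * (t - 0)) - 1) := hρ
      _ = Eb / L * (Real.exp (L * (t - 0)) - 1) := by ring
      _ ≤ Eb / L * Real.exp (L * T) := mul_le_mul_of_nonneg_left hexp hEL
      _ ≤ Eb * Real.exp (L * T) := mul_le_mul_of_nonneg_right hdiv (Real.exp_pos _).le
  have hfin : Eb * Real.exp (L * T) ≤ ((K₀ : ℝ) * (Real.exp (L * T)) ^ 3 + 1) * δ ^ 2 := by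
    rw [hEbdef]
    have := sq_nonneg δ
    nlinarith [Real.exp_pos (L * T), K₀.coe_nonneg]
  exact hbound.trans hfin
end
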